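/- arXiv:1904.12053 — 6 statements merged into one kernel-verified Lean document; each statement's English description precedes it below -/
import Mathlib

section
/- Let μ be a probability measure on a measurable space S, and let κ₁, κ₂ be Markov kernels from S to a measurable space T. Let ε, ε' ≥ 0, and suppose that μ({x ∈ S : D_TV(κ₁(x), κ₂(x)) ≤ ε'}) ≥ 1 − ε. Then the total variation distance between the two joint laws on S × T, namely μ ⊗ κ₁ and μ ⊗ κ₂ (the measures given by A ↦ ∫ κᵢ(x)(A_x) dμ(x)), satisfies D_TV(μ ⊗ κ₁, μ ⊗ κ₂) ≤ ε + ε'. -/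
/-!
For a measurable `A ⊆ S × T`, `(μ ⊗ₘ κᵢ) A = ∫ κᵢ x (A_x) dμ`, so the two joint laws differ on `A`
by at most `∫ |κ₁ x (A_x) - κ₂ x (A_x)| dμ`. The integrand is at most `1` everywhere and at most
`ε'` wherever `tvDist (κ₁ x) (κ₂ x) ≤ ε'`, a set whose complement has `μ`-measure at most `ε`.
-/

open MeasureTheory ProbabilityTheory

/-- Total variation distance between two measures: the supremum over measurable
sets `A` of `|μ A - ν A|`. -/
noncomputable def tvDist {Ω : Type*} [MeasurableSpace Ω] (μ ν : Measure Ω) : ℝ :=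
  ⨆ A : {A : Set Ω // MeasurableSet A}, |(μ A).toReal - (ν A).toReal|

section

variable {Ω : Type*} [MeasurableSpace Ω]

lemma abs_measureReal_sub_le_tvDist (μ ν : Measure Ω) [IsFiniteMeasure μ] [IsFiniteMeasure ν]
    {A : Set Ω} (hA : MeasurableSet A) : |μ.real A - ν.real A| ≤ tvDist μ ν := by
  refine le_ciSup_of_le ⟨μ.real Set.univ + ν.real Set.univ, ?_⟩ ⟨A, hA⟩ le_rfl
  rintro r ⟨⟨B, -⟩, rfl⟩
  have hμ : μ.real B ≤ μ.real Set.univ := measureReal_mono (Set.subset_univ B)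
  have hν : ν.real B ≤ ν.real Set.univ := measureReal_mono (Set.subset_univ B)
  exact abs_sub_le_of_nonneg_of_le measureReal_nonneg
    (hμ.trans (le_add_of_nonneg_right measureReal_nonneg)) measureReal_nonneg
    (hν.trans (le_add_of_nonneg_left measureReal_nonneg))

lemma measureReal_compl_le_of_ofReal_le (μ : Measure Ω) [IsProbabilityMeasure μ] {s : Set Ω}
    (hs : MeasurableSet s) {ε : ℝ} (h : ENNReal.ofReal (1 - ε) ≤ μ s) : μ.real sᶜ ≤ ε := by
  have hs_large : 1 - ε ≤ μ.real s := (ENNReal.ofReal_le_iff_le_toReal (measure_ne_top μ s)).mp h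
  rw [probReal_compl_eq_one_sub hs]
  linarith

lemma integral_le_add_measureReal_compl (μ : Measure Ω) [IsProbabilityMeasure μ] {f : Ω → ℝ}
    (hf : Integrable f μ) {s : Set Ω} (hs : MeasurableSet s) {c : ℝ} (hc : 0 ≤ c)
    (hf_le_one : ∀ x, f x ≤ 1) (hf_le_c : ∀ x ∈ s, f x ≤ c) :
    ∫ x, f x ∂μ ≤ c + μ.real sᶜ := by
  have hle : ∀ x, f x ≤ c + sᶜ.indicator (fun _ => (1 : ℝ)) x := fun x => by
    by_cases hx : x ∈ s
    · simpa [hx] using hf_le_c x hx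
    · simpa [hx] using (hf_le_one x).trans (le_add_of_nonneg_left hc)
  calc ∫ x, f x ∂μ ≤ ∫ x, (c + sᶜ.indicator (fun _ => (1 : ℝ)) x) ∂μ :=
        integral_mono hf ((integrable_const c).add ((integrable_const 1).indicator hs.compl)) hle
    _ = c + μ.real sᶜ := by
        rw [integral_add (integrable_const c) ((integrable_const 1).indicator hs.compl),
          integral_indicator_const _ hs.compl, integral_const, probReal_univ, one_smul, smul_eq_mul,
          mul_one]

end

section

variable {S T : Type*} [MeasurableSpace S] [MeasurableSpace T] {μ : Measure S} {A : Set (S × T)}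

lemma measurable_measureReal_prodMk_preimage (κ : Kernel S T) [IsSFiniteKernel κ]
    (hA : MeasurableSet A) : Measurable fun x => (κ x).real (Prod.mk x ⁻¹' A) :=
  (Kernel.measurable_kernel_prodMk_left hA).ennreal_toReal

lemma integrable_measureReal_prodMk_preimage [IsFiniteMeasure μ] (κ : Kernel S T)
    [IsFiniteKernel κ] (hA : MeasurableSet A) :
    Integrable (fun x => (κ x).real (Prod.mk x ⁻¹' A)) μ :=
  integrable_toReal_of_lintegral_ne_top (Kernel.measurable_kernel_prodMk_left hA).aemeasurable
    (by rw [← Measure.compProd_apply hA]; exact measure_ne_top _ _)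

lemma measureReal_compProd_apply [SFinite μ] (κ : Kernel S T) [IsFiniteKernel κ]
    (hA : MeasurableSet A) :
    (μ ⊗ₘ κ).real A = ∫ x, (κ x).real (Prod.mk x ⁻¹' A) ∂μ := by
  rw [measureReal_def, Measure.compProd_apply hA, ← integral_toReal
    (Kernel.measurable_kernel_prodMk_left hA).aemeasurable
    (ae_of_all _ fun x => measure_lt_top _ _)]
  rfl

lemma abs_measureReal_compProd_sub_le_integral [IsFiniteMeasure μ] (κ₁ κ₂ : Kernel S T)
    [IsFiniteKernel κ₁] [IsFiniteKernel κ₂] (hA : MeasurableSet A) :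
    |(μ ⊗ₘ κ₁).real A - (μ ⊗ₘ κ₂).real A|
      ≤ ∫ x, |(κ₁ x).real (Prod.mk x ⁻¹' A) - (κ₂ x).real (Prod.mk x ⁻¹' A)| ∂μ := by
  rw [measureReal_compProd_apply κ₁ hA, measureReal_compProd_apply κ₂ hA,
    ← integral_sub (integrable_measureReal_prodMk_preimage κ₁ hA)
      (integrable_measureReal_prodMk_preimage κ₂ hA)]
  exact abs_integral_le_integral_abs

end

theorem tvDist_compProd_le_general {S T : Type*} [MeasurableSpace S] [MeasurableSpace T]
    (μ : Measure S) [IsProbabilityMeasure μ]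
    (κ₁ κ₂ : Kernel S T) [IsMarkovKernel κ₁] [IsMarkovKernel κ₂]
    (ε ε' : ℝ) (hε' : 0 ≤ ε')
    (h : ENNReal.ofReal (1 - ε) ≤ μ {x : S | tvDist (κ₁ x) (κ₂ x) ≤ ε'}) :
    tvDist (μ ⊗ₘ κ₁) (μ ⊗ₘ κ₂) ≤ ε + ε' := by
  refine ciSup_le fun ⟨A, hA⟩ => ?_
  let δ : S → ℝ := fun x => |(κ₁ x).real (Prod.mk x ⁻¹' A) - (κ₂ x).real (Prod.mk x ⁻¹' A)|
  have hδ : Integrable δ μ := ((integrable_measureReal_prodMk_preimage κ₁ hA).sub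
    (integrable_measureReal_prodMk_preimage κ₂ hA)).abs
  have hD : MeasurableSet {x | δ x ≤ ε'} := measurableSet_le
    ((measurable_measureReal_prodMk_preimage κ₁ hA).sub
      (measurable_measureReal_prodMk_preimage κ₂ hA)).abs measurable_const
  have hgood : {x | tvDist (κ₁ x) (κ₂ x) ≤ ε'} ⊆ {x | δ x ≤ ε'} := fun x hx =>
    (abs_measureReal_sub_le_tvDist (κ₁ x) (κ₂ x) (measurable_prodMk_left hA)).trans hx
  have hbad : μ.real {x | δ x ≤ ε'}ᶜ ≤ ε :=
    measureReal_compl_le_of_ofReal_le μ hD (h.trans (measure_mono hgood))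
  calc |(μ ⊗ₘ κ₁).real A - (μ ⊗ₘ κ₂).real A| ≤ ∫ x, δ x ∂μ :=
        abs_measureReal_compProd_sub_le_integral κ₁ κ₂ hA
    _ ≤ ε' + μ.real {x | δ x ≤ ε'}ᶜ :=
        integral_le_add_measureReal_compl μ hδ hD hε'
          (fun x => abs_sub_le_of_nonneg_of_le measureReal_nonneg measureReal_le_one
            measureReal_nonneg measureReal_le_one) fun _ hx => hx
    _ ≤ ε + ε' := by linarith

/-- If with probability at least `1 − ε` over `x ∼ μ` the conditional laws `κ₁ x` and
`κ₂ x` are within total variation distance `ε'`, then the joint laws `μ ⊗ κ₁` and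
`μ ⊗ κ₂` are within total variation distance `ε + ε'`. -/
theorem tvDist_compProd_le {S T : Type*} [MeasurableSpace S] [MeasurableSpace T]
    (μ : Measure S) [IsProbabilityMeasure μ]
    (κ₁ κ₂ : Kernel S T) [IsMarkovKernel κ₁] [IsMarkovKernel κ₂]
    (ε ε' : ℝ) (hε : 0 ≤ ε) (hε' : 0 ≤ ε')
    (h : ENNReal.ofReal (1 - ε) ≤ μ {x : S | tvDist (κ₁ x) (κ₂ x) ≤ ε'}) :
    tvDist (μ ⊗ₘ κ₁) (μ ⊗ₘ κ₂) ≤ ε + ε' :=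
  tvDist_compProd_le_general μ κ₁ κ₂ ε ε' hε' h
end

section
/- Let d ≥ 1, let n, r > 0 be reals with r ≤ n/18, let μ̂ ∈ ℝ^d, and set α = 10r/(r + n/2). Let p denote the Lebesgue density of N(0, I_d) on ℝ^d and q the Lebesgue density of the mixture (1−α)·N(0, I_d) + α·N(μ̂, I_d). Then the Hellinger distance satisfies H(N(0,I_d), (1−α)·N(0,I_d) + α·N(μ̂,I_d)) := (∫_{ℝ^d} (√(p(x)) − √(q(x)))² dx)^{1/2} ≤ (24r/n)·e^{3‖μ̂‖²/2}. -/
/-!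
Pointwise, `(√p - √q)² ≤ (p - q)² / p`, so the squared Hellinger distance is dominated by the
χ²-divergence; for the mixture `q = (1-α) p + α p_μ` this gives `H² ≤ α² χ²(p_μ ‖ p)`. For unit
Gaussians completing the square gives `p_μ² / p_ν = exp ‖μ - ν‖² · p_{2μ-ν}`, hence
`χ²(p_μ ‖ p_0) = exp ‖μ‖² - 1`, and `α ≤ 20 r / n`.
-/

open MeasureTheory ProbabilityTheory

/-- The Lebesgue density of the Gaussian `N(μ, I_d)` on `ℝ^d`, i.e. the product of the
one-dimensional unit-variance Gaussian densities. -/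
noncomputable def gaussianIdPDF {d : ℕ} (μ : Fin d → ℝ) (x : Fin d → ℝ) : ℝ :=
  ∏ i, gaussianPDFReal (μ i) 1 (x i)

lemma sq_sqrt_sub_sqrt_le_sq_sub_div {a : ℝ} (b : ℝ) (ha : 0 < a) :
    (√a - √b) ^ 2 ≤ (a - b) ^ 2 / a := by
  rw [le_div_iff₀ ha]
  rcases le_or_gt 0 b with hb | hb
  · -- `(√a - √b)² (√a)² ≤ (√a - √b)² (√a + √b)²`
    have key : (√a - √b) ^ 2 * √a ^ 2 ≤ (√a ^ 2 - √b ^ 2) ^ 2 := by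
      nlinarith [sq_nonneg (√a - √b), Real.sqrt_nonneg a, Real.sqrt_nonneg b,
        mul_nonneg (Real.sqrt_nonneg a) (Real.sqrt_nonneg b)]
    rwa [Real.sq_sqrt ha.le, Real.sq_sqrt hb] at key
  · rw [Real.sqrt_eq_zero_of_nonpos hb.le, sub_zero, Real.sq_sqrt ha.le]
    nlinarith

section Mixture

variable {Ω : Type*} [MeasurableSpace Ω] {μ : Measure Ω} {p q : Ω → ℝ}

lemma integral_sq_sqrt_sub_sqrt_mixture_le (hp : ∀ᵐ x ∂μ, 0 < p x)
    (hp_int : Integrable p μ) (hq_int : Integrable q μ)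
    (hqp_int : Integrable (fun x ↦ q x ^ 2 / p x) μ)
    (hp_one : ∫ x, p x ∂μ = 1) (hq_one : ∫ x, q x ∂μ = 1) (α : ℝ) :
    ∫ x, (√(p x) - √((1 - α) * p x + α * q x)) ^ 2 ∂μ
      ≤ α ^ 2 * (∫ x, q x ^ 2 / p x ∂μ - 1) := by
  have hchi : ∀ᵐ x ∂μ, (p x - ((1 - α) * p x + α * q x)) ^ 2 / p x
      = α ^ 2 * (p x - 2 * q x + q x ^ 2 / p x) := by
    filter_upwards [hp] with x hx
    field_simp
    ring
  have hq2_int : Integrable (fun x ↦ 2 * q x) μ := hq_int.const_mul 2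
  have hpq_int : Integrable (fun x ↦ p x - 2 * q x) μ := hp_int.sub hq2_int
  calc ∫ x, (√(p x) - √((1 - α) * p x + α * q x)) ^ 2 ∂μ
      ≤ ∫ x, α ^ 2 * (p x - 2 * q x + q x ^ 2 / p x) ∂μ := by
        refine integral_mono_of_nonneg (ae_of_all _ fun x ↦ sq_nonneg _)
          ((hpq_int.add hqp_int).const_mul _) ?_
        filter_upwards [hp, hchi] with x hx hx'
        exact hx' ▸ sq_sqrt_sub_sqrt_le_sq_sub_div _ hx
    _ = α ^ 2 * (∫ x, q x ^ 2 / p x ∂μ - 1) := by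
        rw [integral_const_mul, integral_add hpq_int hqp_int, integral_sub hp_int hq2_int,
          integral_const_mul, hp_one, hq_one]
        ring

end Mixture

lemma gaussianPDFReal_sq_div (μ ν x : ℝ) :
    gaussianPDFReal μ 1 x ^ 2 / gaussianPDFReal ν 1 x
      = Real.exp ((μ - ν) ^ 2) * gaussianPDFReal (2 * μ - ν) 1 x := by
  have hν := (gaussianPDFReal_pos ν 1 x one_ne_zero).ne'
  rw [div_eq_iff hν]
  simp only [gaussianPDFReal, NNReal.coe_one, mul_one]
  have hexp : Real.exp (-(x - μ) ^ 2 / 2) ^ 2 = Real.exp ((μ - ν) ^ 2)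
      * Real.exp (-(x - (2 * μ - ν)) ^ 2 / 2) * Real.exp (-(x - ν) ^ 2 / 2) := by
    rw [← Real.exp_nat_mul, ← Real.exp_add, ← Real.exp_add]
    congr 1
    ring
  rw [mul_pow, hexp]
  ring

lemma gaussianIdPDF_sq_div {d : ℕ} (μ ν x : Fin d → ℝ) :
    gaussianIdPDF μ x ^ 2 / gaussianIdPDF ν x
      = Real.exp (∑ i, (μ i - ν i) ^ 2) * gaussianIdPDF (fun i ↦ 2 * μ i - ν i) x := by
  simp only [gaussianIdPDF, ← Finset.prod_pow, ← Finset.prod_div_distrib, Real.exp_sum,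
    ← Finset.prod_mul_distrib, gaussianPDFReal_sq_div]

lemma gaussianIdPDF_pos {d : ℕ} (μ x : Fin d → ℝ) : 0 < gaussianIdPDF μ x :=
  Finset.prod_pos fun _ _ ↦ gaussianPDFReal_pos _ _ _ one_ne_zero

lemma integrable_gaussianIdPDF {d : ℕ} (μ : Fin d → ℝ) : Integrable (gaussianIdPDF μ) :=
  Integrable.fintype_prod (f := fun i ↦ gaussianPDFReal (μ i) 1)
    fun _ ↦ integrable_gaussianPDFReal _ _

lemma integral_gaussianIdPDF {d : ℕ} (μ : Fin d → ℝ) : ∫ x, gaussianIdPDF μ x = 1 := by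
  simp only [gaussianIdPDF, integral_fintype_prod_volume_eq_prod,
    integral_gaussianPDFReal_eq_one _ one_ne_zero, Finset.prod_const_one]

lemma integrable_gaussianIdPDF_sq_div {d : ℕ} (μ ν : Fin d → ℝ) :
    Integrable fun x ↦ gaussianIdPDF μ x ^ 2 / gaussianIdPDF ν x := by
  simp only [gaussianIdPDF_sq_div]
  exact (integrable_gaussianIdPDF _).const_mul _

lemma integral_gaussianIdPDF_sq_div {d : ℕ} (μ ν : Fin d → ℝ) :
    ∫ x, gaussianIdPDF μ x ^ 2 / gaussianIdPDF ν x = Real.exp (∑ i, (μ i - ν i) ^ 2) := by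
  simp only [gaussianIdPDF_sq_div, integral_const_mul, integral_gaussianIdPDF, mul_one]

lemma integral_sq_sqrt_sub_sqrt_gaussianIdPDF_mixture_le {d : ℕ} (μ : Fin d → ℝ) (α : ℝ) :
    ∫ x, (√(gaussianIdPDF 0 x) - √((1 - α) * gaussianIdPDF 0 x + α * gaussianIdPDF μ x)) ^ 2
      ≤ α ^ 2 * (Real.exp (∑ i, μ i ^ 2) - 1) := by
  simpa [integral_gaussianIdPDF_sq_div] using
    integral_sq_sqrt_sub_sqrt_mixture_le (ae_of_all _ (gaussianIdPDF_pos 0))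
      (integrable_gaussianIdPDF 0) (integrable_gaussianIdPDF μ)
      (integrable_gaussianIdPDF_sq_div μ 0) (integral_gaussianIdPDF 0)
      (integral_gaussianIdPDF μ) α

theorem hellinger_gaussian_mixture_general (d : ℕ) (n r : ℝ) (hn : 0 < n)
    (hr : 0 < r) (muhat : Fin d → ℝ) :
    Real.sqrt (∫ x : Fin d → ℝ,
        (Real.sqrt (gaussianIdPDF (0 : Fin d → ℝ) x) -
          Real.sqrt ((1 - 10 * r / (r + n / 2)) * gaussianIdPDF (0 : Fin d → ℝ) x +
            (10 * r / (r + n / 2)) * gaussianIdPDF muhat x)) ^ 2)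
      ≤ 24 * r / n * Real.exp (3 * (∑ i, (muhat i) ^ 2) / 2) := by
  set α := 10 * r / (r + n / 2)
  set M := ∑ i, muhat i ^ 2
  have hα_nonneg : 0 ≤ α := by positivity
  have hα_le : α ≤ 24 * r / n := by
    rw [div_le_div_iff₀ (by positivity) hn]
    nlinarith
  calc _ ≤ √(α ^ 2 * (Real.exp M - 1)) :=
        Real.sqrt_le_sqrt (integral_sq_sqrt_sub_sqrt_gaussianIdPDF_mixture_le muhat α)
    _ = α * √(Real.exp M - 1) := by rw [Real.sqrt_mul (sq_nonneg α), Real.sqrt_sq hα_nonneg]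
    _ ≤ α * Real.exp (M / 2) := by
        rw [Real.exp_half]
        gcongr
        linarith
    _ ≤ 24 * r / n * Real.exp (3 * M / 2) := by
        gcongr
        have hM : 0 ≤ M := Finset.sum_nonneg fun i _ ↦ sq_nonneg _
        linarith

/-- Hellinger-distance bound between the standard Gaussian `N(0, I_d)` and the mixture
`(1−α)·N(0, I_d) + α·N(μ̂, I_d)` with `α = 10r/(r + n/2)`:  for `r ≤ n/18`, the Hellinger
distance is at most `(24r/n)·exp(3‖μ̂‖²/2)`. -/
theorem hellinger_gaussian_mixture (d : ℕ) (hd : 1 ≤ d) (n r : ℝ) (hn : 0 < n)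
    (hr : 0 < r) (hrn : r ≤ n / 18) (muhat : Fin d → ℝ) :
    Real.sqrt (∫ x : Fin d → ℝ,
        (Real.sqrt (gaussianIdPDF (0 : Fin d → ℝ) x) -
          Real.sqrt ((1 - 10 * r / (r + n / 2)) * gaussianIdPDF (0 : Fin d → ℝ) x +
            (10 * r / (r + n / 2)) * gaussianIdPDF muhat x)) ^ 2)
      ≤ 24 * r / n * Real.exp (3 * (∑ i, (muhat i) ^ 2) / 2) :=
  hellinger_gaussian_mixture_general d n r hn hr muhat
end

section
/- Let k ≥ 1 and let n be an integer with √k/2 < n ≤ k/2. Let X₁,…,Xₙ be i.i.d. uniform draws from a set of k elements, and let U = |{X₁,…,Xₙ}| be the number of distinct values among them. Then Pr(U ≥ E[U] + 7n/√k) ≤ 1/8. -/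
open MeasureTheory ProbabilityTheory
open scoped NNReal ENNReal

/-- The uniform probability measure on a (nonempty) finite set `S`. -/
noncomputable def unifFinset {A : Type*} [MeasurableSpace A] (S : Finset A) : Measure A :=
  (S.card : ℝ≥0∞)⁻¹ • ∑ a ∈ S, Measure.dirac a

/-- The number of distinct values among the coordinates of `x`. -/
noncomputable def numDistinct {n k : ℕ} (x : Fin n → Fin k) : ℕ :=
  (Finset.univ.image x).card

/-!
Write `U = k - ∑ᵥ Mᵥ`, where `Mᵥ` indicates that the value `v` is missed by all draws. The
indicator of missing a set `s` has mean `(1 - |s|/k)ⁿ` and products of such indicators are again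
such indicators, so all covariances are explicit:
`Var U = k (aⁿ - bⁿ) - k² (a²ⁿ - bⁿ)` with `a = 1 - 1/k`, `b = 1 - 2/k`.
Since `k (a - b) = k² (a² - b) = 1`, the mean-value bounds
`n yⁿ⁻¹ (x - y) ≤ xⁿ - yⁿ ≤ n xⁿ⁻¹ (x - y)` give `Var U ≤ n (aⁿ⁻¹ - bⁿ⁻¹) ≤ n²/k`, and
Chebyshev's inequality at distance `7n/√k` bounds the tail by `1/49`.
-/

open Finset

section GeomSum

variable {R : Type*} [CommRing R] [PartialOrder R] [IsOrderedRing R] {x y : R}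

lemma pow_sub_pow_le_natCast_mul (hy : 0 ≤ y) (hxy : y ≤ x) (n : ℕ) :
    x ^ n - y ^ n ≤ n * x ^ (n - 1) * (x - y) := by
  rw [← geom_sum₂_mul, ← geom_sum₂_self]
  refine mul_le_mul_of_nonneg_right (sum_le_sum fun i _ => ?_) (sub_nonneg.2 hxy)
  exact mul_le_mul_of_nonneg_left (pow_le_pow_left₀ hy hxy _) (pow_nonneg (hy.trans hxy) _)

lemma natCast_mul_le_pow_sub_pow (hy : 0 ≤ y) (hxy : y ≤ x) (n : ℕ) :
    n * y ^ (n - 1) * (x - y) ≤ x ^ n - y ^ n := by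
  rw [← geom_sum₂_mul, ← geom_sum₂_self]
  refine mul_le_mul_of_nonneg_right (sum_le_sum fun i _ => ?_) (sub_nonneg.2 hxy)
  exact mul_le_mul_of_nonneg_right (pow_le_pow_left₀ hy hxy _) (pow_nonneg hy _)

end GeomSum

section Uniform

variable {α ι : Type*} [MeasurableSpace α]

lemma isProbabilityMeasure_unifFinset {S : Finset α} (hS : S.Nonempty) :
    IsProbabilityMeasure (unifFinset S) := by
  constructor
  simp [unifFinset, ENNReal.inv_mul_cancel, hS.ne_empty]

variable [MeasurableSingletonClass α]

lemma integral_unifFinset (S : Finset α) (f : α → ℝ) :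
    ∫ a, f a ∂unifFinset S = (∑ a ∈ S, f a) / #S := by
  rw [unifFinset, integral_smul_measure, integral_finsetSum_measure fun a _ =>
    integrable_dirac enorm_lt_top]
  simp [integral_dirac, div_eq_inv_mul]

variable [Fintype α] [Fintype ι]

instance [Nonempty α] : IsProbabilityMeasure (unifFinset (univ : Finset α)) :=
  isProbabilityMeasure_unifFinset univ_nonempty

lemma unifFinset_univ_singleton (a : α) :
    unifFinset (univ : Finset α) {a} = (Fintype.card α : ℝ≥0∞)⁻¹ := by
  classical
  simp [unifFinset, Measure.finsetSum_apply, Set.indicator_apply]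

lemma pi_unifFinset_univ [Nonempty α] [DecidableEq ι] :
    Measure.pi (fun _ : ι => unifFinset (univ : Finset α)) = unifFinset univ := by
  refine Measure.ext_iff_singleton.2 fun x => ?_
  rw [← Set.univ_pi_singleton x, Measure.pi_pi, Set.univ_pi_singleton]
  simp [unifFinset_univ_singleton, ENNReal.inv_pow]

end Uniform

section Missing

variable {ι α : Type*} [Fintype ι] [DecidableEq α]

def missIndicator (s : Finset α) (x : ι → α) : ℝ :=
  ∏ i, if x i ∈ s then 0 else 1

lemma missIndicator_mul (s t : Finset α) (x : ι → α) :
    missIndicator s x * missIndicator t x = missIndicator (s ∪ t) x := by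
  rw [missIndicator, missIndicator, missIndicator, ← prod_mul_distrib]
  refine prod_congr rfl fun i _ => ?_
  by_cases hs : x i ∈ s <;> by_cases ht : x i ∈ t <;> simp [hs, ht]

variable [Fintype α]

lemma sum_ite_mem_zero_one (s : Finset α) :
    ∑ a : α, (if a ∈ s then (0 : ℝ) else 1) = Fintype.card α - #s := by
  simp [sum_ite, filter_notMem_eq_sdiff, card_sdiff, Nat.cast_sub (card_le_univ s)]

lemma sum_sum_card_union_singleton (f : ℕ → ℝ) :
    ∑ v : α, ∑ w : α, f #({v} ∪ {w}) = Fintype.card α * (f 1 + (Fintype.card α - 1) * f 2) := by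
  have hrow : ∀ v : α, ∑ w : α, f #({v} ∪ {w}) = f 1 + (Fintype.card α - 1) * f 2 := by
    intro v
    rw [Fintype.sum_eq_add_sum_compl v, union_self, card_singleton,
      sum_congr rfl fun w hw => by
        rw [← insert_eq, card_pair (Ne.symm (mem_compl.1 hw ∘ mem_singleton.2))],
      sum_const, card_compl, card_singleton, nsmul_eq_mul,
      Nat.cast_sub (Fintype.card_pos_iff.2 ⟨v⟩), Nat.cast_one]
  rw [sum_congr rfl fun v _ => hrow v, sum_const, card_univ, nsmul_eq_mul]

variable [DecidableEq ι]

lemma sum_missIndicator (s : Finset α) :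
    ∑ x : ι → α, missIndicator s x = ((Fintype.card α : ℝ) - #s) ^ Fintype.card ι := by
  rw [← sum_ite_mem_zero_one, ← card_univ, ← prod_const, Fintype.prod_sum]
  rfl

variable [Nonempty α] [MeasurableSpace α] [MeasurableSingletonClass α]

local notation "𝒰" => Measure.pi fun _ : ι => unifFinset (univ : Finset α)

lemma integral_missIndicator (s : Finset α) :
    ∫ x, missIndicator s x ∂𝒰 = (1 - #s / Fintype.card α : ℝ) ^ Fintype.card ι := by
  rw [pi_unifFinset_univ, integral_unifFinset, sum_missIndicator, card_univ, Fintype.card_fun,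
    Nat.cast_pow, ← div_pow, sub_div, div_self (by positivity)]

lemma covariance_missIndicator (s t : Finset α) :
    cov[missIndicator s, missIndicator t; 𝒰] =
      (1 - #(s ∪ t) / Fintype.card α : ℝ) ^ Fintype.card ι -
        (1 - #s / Fintype.card α : ℝ) ^ Fintype.card ι *
          (1 - #t / Fintype.card α : ℝ) ^ Fintype.card ι := by
  rw [covariance_eq_sub .of_discrete .of_discrete, ← integral_missIndicator,
    ← integral_missIndicator, ← integral_missIndicator]
  simp only [Pi.mul_apply, missIndicator_mul]

end Missing

section NumDistinct

variable {n k : ℕ}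

local notation "𝒰" => Measure.pi fun _ : Fin n => unifFinset (univ : Finset (Fin k))

lemma numDistinct_eq_sub_sum_missIndicator (x : Fin n → Fin k) :
    (numDistinct x : ℝ) = k - ∑ v, missIndicator {v} x := by
  have hmiss : ∀ v, missIndicator {v} x = if v ∈ univ.image x then 0 else 1 := by
    intro v
    split_ifs with hv
    · obtain ⟨i, -, hi⟩ := mem_image.1 hv
      exact prod_eq_zero (mem_univ i) (if_pos (mem_singleton.2 hi))
    · exact prod_eq_one fun i _ =>
        if_neg fun hi => hv (mem_image.2 ⟨i, mem_univ i, mem_singleton.1 hi⟩)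
  rw [sum_congr rfl fun v _ => hmiss v, sum_ite_mem_zero_one, Fintype.card_fin, numDistinct]
  ring

lemma variance_numDistinct [NeZero k] :
    Var[fun x => (numDistinct x : ℝ); 𝒰] =
      k * ((1 - 1 / k) ^ n - (1 - 1 / k) ^ (2 * n)) +
        k * (k - 1) * ((1 - 2 / k) ^ n - (1 - 1 / k) ^ (2 * n)) := by
  simp_rw [numDistinct_eq_sub_sum_missIndicator]
  rw [variance_const_sub (by fun_prop), variance_fun_sum fun _ => .of_discrete]
  simp only [covariance_missIndicator, card_singleton, Fintype.card_fin, Nat.cast_one]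
  rw [sum_sum_card_union_singleton
      (fun m => (1 - m / k : ℝ) ^ n - (1 - 1 / k) ^ n * (1 - 1 / k) ^ n),
    Fintype.card_fin]
  push_cast
  ring

lemma variance_numDistinct_le [NeZero k] :
    Var[fun x => (numDistinct x : ℝ); 𝒰] ≤ n ^ 2 / k := by
  rw [variance_numDistinct]
  obtain rfl | hk : k = 1 ∨ 2 ≤ k := by have := NeZero.ne k; omega
  · cases n <;> simp; positivity
  set a : ℝ := 1 - 1 / k
  set b : ℝ := 1 - 2 / k
  have hk' : (2 : ℝ) ≤ k := by exact_mod_cast hk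
  have hk0 : (k : ℝ) ≠ 0 := by positivity
  have hab : k * (a - b) = 1 := by simp only [a, b]; field_simp; ring
  have hab2 : k ^ 2 * (a ^ 2 - b) = 1 := by simp only [a, b]; field_simp; ring
  have hb : 0 ≤ b := by rw [sub_nonneg, div_le_one (by positivity)]; exact hk'
  have hba : b ≤ a := by nlinarith
  have hba2 : b ≤ a ^ 2 := by nlinarith
  have ha : a ≤ 1 := sub_le_self _ (by positivity)
  calc k * (a ^ n - a ^ (2 * n)) + k * (k - 1) * (b ^ n - a ^ (2 * n))
      = k * (a ^ n - b ^ n) - k ^ 2 * ((a ^ 2) ^ n - b ^ n) := by rw [← pow_mul]; ring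
    _ ≤ n * a ^ (n - 1) - n * b ^ (n - 1) := by
      have hupper := mul_le_mul_of_nonneg_left (pow_sub_pow_le_natCast_mul hb hba n)
        (by positivity : (0 : ℝ) ≤ k)
      have hlower := mul_le_mul_of_nonneg_left (natCast_mul_le_pow_sub_pow hb hba2 n)
        (by positivity : (0 : ℝ) ≤ k ^ 2)
      rw [mul_comm _ (a - b), ← mul_assoc, ← mul_assoc, hab, one_mul] at hupper
      rw [mul_comm _ (a ^ 2 - b), ← mul_assoc, ← mul_assoc, hab2, one_mul] at hlower
      linarith
    _ ≤ n * ((n - 1 : ℕ) * a ^ (n - 1 - 1) * (a - b)) := by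
      rw [← mul_sub]
      exact mul_le_mul_of_nonneg_left (pow_sub_pow_le_natCast_mul hb hba _) (by positivity)
    _ ≤ n * (n * 1 * (a - b)) := by
      have ha0 : 0 ≤ a := hb.trans hba
      have hab0 : 0 ≤ a - b := sub_nonneg.2 hba
      have hpow : a ^ (n - 1 - 1) ≤ 1 := pow_le_one₀ ha0 ha
      have hn : ((n - 1 : ℕ) : ℝ) ≤ n := by exact_mod_cast n.sub_le 1
      gcongr
    _ = n ^ 2 / k := by
      rw [eq_div_iff hk0]
      linear_combination (n : ℝ) ^ 2 * hab

end NumDistinct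

lemma meas_integral_add_le_le_variance_div_sq {Ω : Type*} [MeasurableSpace Ω] {μ : Measure Ω}
    [IsFiniteMeasure μ] {X : Ω → ℝ} (hX : MemLp X 2 μ) {c : ℝ} (hc : 0 < c) :
    μ {ω | μ[X] + c ≤ X ω} ≤ ENNReal.ofReal (Var[X; μ] / c ^ 2) :=
  (measure_mono fun ω (hω : μ[X] + c ≤ X ω) =>
    (show c ≤ |X ω - μ[X]| from (le_sub_iff_add_le'.2 hω).trans (le_abs_self _))).trans
    (meas_ge_le_variance_div_sq hX hc)

theorem unique_count_upper_tail_general (k n : ℕ) (hk : 1 ≤ k)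
    (h1 : Real.sqrt k / 2 < n) :
    (Measure.pi fun _ : Fin n => unifFinset (Finset.univ : Finset (Fin k)))
        {x : Fin n → Fin k |
          (∫ y : Fin n → Fin k, (numDistinct y : ℝ)
              ∂(Measure.pi fun _ : Fin n => unifFinset (Finset.univ : Finset (Fin k))))
            + 7 * n / Real.sqrt k ≤ (numDistinct x : ℝ)}
      ≤ 1 / 8 := by
  have : NeZero k := ⟨by omega⟩
  have hn : (0 : ℝ) < n := (div_nonneg (Real.sqrt_nonneg k) zero_le_two).trans_lt h1
  have hk0 : (0 : ℝ) < k := by positivity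
  refine (meas_integral_add_le_le_variance_div_sq .of_discrete (by positivity)).trans ?_
  rw [show (1 / 8 : ℝ≥0∞) = ENNReal.ofReal (1 / 8) by
    rw [ENNReal.ofReal_div_of_pos (by norm_num)]; simp]
  refine ENNReal.ofReal_le_ofReal ?_
  calc Var[fun x => (numDistinct x : ℝ); _] / (7 * n / Real.sqrt k) ^ 2
      ≤ (n ^ 2 / k) / (7 * n / Real.sqrt k) ^ 2 := by gcongr; exact variance_numDistinct_le
    _ = 1 / 49 := by
      rw [div_pow, mul_pow, Real.sq_sqrt hk0.le]
      field_simp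
      norm_num
    _ ≤ 1 / 8 := by norm_num

/-- Upper tail bound for the number `U` of distinct values among `n` i.i.d. uniform draws
from a `k`-element set, for `√k/2 < n ≤ k/2`: `Pr(U ≥ E[U] + 7n/√k) ≤ 1/8`. -/
theorem unique_count_upper_tail (k n : ℕ) (hk : 1 ≤ k)
    (h1 : Real.sqrt k / 2 < n) (h2 : (n : ℝ) ≤ k / 2) :
    (Measure.pi fun _ : Fin n => unifFinset (Finset.univ : Finset (Fin k)))
        {x : Fin n → Fin k |
          (∫ y : Fin n → Fin k, (numDistinct y : ℝ)
              ∂(Measure.pi fun _ : Fin n => unifFinset (Finset.univ : Finset (Fin k))))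
            + 7 * n / Real.sqrt k ≤ (numDistinct x : ℝ)}
      ≤ 1 / 8 :=
  unique_count_upper_tail_general k n hk h1
end

section
/- Let k ≥ 1 and let n, m be integers with √k/2 < n, n ≤ m ≤ 2n, and m ≤ k/2. Let X₁,…,X_m be i.i.d. uniform draws from a set of k elements, and let U = |{X₁,…,X_m}| be the number of distinct values among them. Then Pr(U ≤ E[U] − 8n/√k) ≤ 1/8. -/
open MeasureTheory ProbabilityTheory
open scoped NNReal ENNReal

/-!
Let `W = k - U` be the number of values that are never drawn. As a sum of the indicators of the
events "`v` is missed", `W` has `E[W] = k (1 - 1/k)^m` and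
`E[W^2] = E[W] + k (k - 1) (1 - 2/k)^m`. Comparing `x^m - y^m` with `m (x - y)` times a power of
`x` or `y`, the two leading terms of the variance cancel up to `m^2/k`, so
`Var U = Var W ≤ m^2/k`.
Chebyshev's inequality at distance `8n/√k` then bounds the probability by `m^2/(64 n^2) ≤ 1/16`.
-/

open Finset

section PowSub
variable {R : Type*} [CommRing R] [LinearOrder R] [IsStrictOrderedRing R] {x y : R}

lemma mul_pow_pred_mul_sub_le_pow_sub_pow (hy : 0 ≤ y) (hyx : y ≤ x) (n : ℕ) :
    n * y ^ (n - 1) * (x - y) ≤ x ^ n - y ^ n := by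
  rw [← geom_sum₂_mul]
  gcongr ?_ * _
  calc (n : R) * y ^ (n - 1) = ∑ i ∈ range n, y ^ (n - 1) := by simp
    _ = ∑ i ∈ range n, y ^ i * y ^ (n - 1 - i) := sum_congr rfl fun i hi => by
        rw [← pow_add, Nat.add_sub_cancel' (by simp at hi; omega)]
    _ ≤ ∑ i ∈ range n, x ^ i * y ^ (n - 1 - i) := by gcongr

lemma pow_sub_pow_le_mul_pow_pred_mul_sub (hy : 0 ≤ y) (hyx : y ≤ x) (n : ℕ) :
    x ^ n - y ^ n ≤ n * x ^ (n - 1) * (x - y) := by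
  have h := abs_pow_sub_pow_le x y n
  rw [abs_of_nonneg (sub_nonneg.2 (pow_le_pow_left₀ hy hyx n)), abs_of_nonneg (sub_nonneg.2 hyx),
    abs_of_nonneg (hy.trans hyx), abs_of_nonneg hy, max_eq_left hyx] at h
  linarith

end PowSub

/-- The left-hand side is the variance of the number of values missed by `m` uniform draws from
`q` values. With `a = 1 - 1/q`, `b = 1 - 2/q` it equals `q (a^m - b^m) - q^2 ((a^2)^m - b^m)`,
and `a - b = 1/q`, `a^2 - b = 1/q^2`. -/
lemma occupancy_variance_formula_le {q : ℝ} (hq : 2 ≤ q) (m : ℕ) :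
    q * (1 - 1 / q) ^ m + q * (q - 1) * (1 - 2 / q) ^ m - (q * (1 - 1 / q) ^ m) ^ 2
      ≤ m ^ 2 / q := by
  have hq0 : 0 < q := by linarith
  set a := 1 - 1 / q with ha
  set b := 1 - 2 / q with hb
  have hb0 : 0 ≤ b := by rw [hb, sub_nonneg, div_le_one hq0]; exact hq
  have hab : a - b = 1 / q := by ring
  have ha2b : a ^ 2 - b = 1 / q ^ 2 := by rw [ha, hb]; field_simp; ring
  have hba : b ≤ a := by linarith [one_div_pos.2 hq0]
  have ha1 : a ≤ 1 := by linarith [one_div_pos.2 hq0]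
  have hquad : m * b ^ (m - 1) ≤ q ^ 2 * ((a ^ 2) ^ m - b ^ m) := by
    have h := mul_pow_pred_mul_sub_le_pow_sub_pow hb0 (by nlinarith : b ≤ a ^ 2) m
    rw [ha2b] at h
    calc (m : ℝ) * b ^ (m - 1) = q ^ 2 * (m * b ^ (m - 1) * (1 / q ^ 2)) := by field_simp
      _ ≤ _ := by gcongr
  have hlin : q * (a ^ m - b ^ m) ≤ m * a ^ (m - 1) := by
    have h := pow_sub_pow_le_mul_pow_pred_mul_sub hb0 hba m
    rw [hab] at h
    calc q * (a ^ m - b ^ m) ≤ q * (m * a ^ (m - 1) * (1 / q)) := by gcongr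
      _ = m * a ^ (m - 1) := by field_simp
  have hpred : a ^ (m - 1) - b ^ (m - 1) ≤ m / q := by
    have h := pow_sub_pow_le_mul_pow_pred_mul_sub hb0 hba (m - 1)
    rw [hab] at h
    refine h.trans ?_
    calc ((m - 1 : ℕ) : ℝ) * a ^ (m - 1 - 1) * (1 / q) ≤ m * 1 * (1 / q) := by
          gcongr
          · exact pow_nonneg (hb0.trans hba) _
          · exact_mod_cast Nat.sub_le m 1
          · exact pow_le_one₀ (by linarith) ha1
      _ = m / q := by ring
  calc q * a ^ m + q * (q - 1) * b ^ m - (q * a ^ m) ^ 2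
      = q * (a ^ m - b ^ m) - q ^ 2 * ((a ^ 2) ^ m - b ^ m) := by rw [← pow_mul, pow_mul']; ring
    _ ≤ m * (a ^ (m - 1) - b ^ (m - 1)) := by linarith
    _ ≤ m * (m / q) := by gcongr
    _ = m ^ 2 / q := by ring

lemma unifFinset_univ {α : Type*} [Fintype α] [MeasurableSpace α] :
    unifFinset (univ : Finset α) = uniformOn Set.univ := by
  ext s _
  rw [uniformOn_univ, unifFinset, ← Measure.sum_fintype, ← Measure.count, card_univ,
    Measure.smul_apply, smul_eq_mul, ENNReal.div_eq_inv_mul]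

section Occupancy
variable {ι α : Type*}

variable (ι) in
def avoiding (T : Finset α) : Set (ι → α) := Set.univ.pi fun _ => (T : Set α)ᶜ

@[simp] lemma mem_avoiding {T : Finset α} {x : ι → α} :
    x ∈ avoiding ι T ↔ ∀ i, x i ∉ T := by
  simp [avoiding]

variable [DecidableEq α]

lemma avoiding_inter_avoiding (S T : Finset α) :
    avoiding ι S ∩ avoiding ι T = avoiding ι (S ∪ T) := by
  ext x; simp [forall_and]

variable [Fintype ι] [Fintype α]

def numMissing (x : ι → α) : ℕ := #(univ.image x)ᶜ

lemma numMissing_eq_sum_indicator (x : ι → α) :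
    (numMissing x : ℝ) = ∑ v, (avoiding ι {v}).indicator 1 x := by
  classical
  simp only [Set.indicator_apply, mem_avoiding, mem_singleton, Pi.one_apply]
  rw [sum_boole, numMissing]
  congr 2
  ext v
  simp

variable [MeasurableSpace α] [MeasurableSingletonClass α]

lemma measureReal_avoiding [Nonempty α] (T : Finset α) :
    (Measure.pi fun _ : ι => uniformOn (Set.univ : Set α)).real (avoiding ι T)
      = (1 - #T / Fintype.card α : ℝ) ^ Fintype.card ι := by
  have hα : (Fintype.card α : ℝ) ≠ 0 := Nat.cast_ne_zero.2 Fintype.card_ne_zero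
  rw [measureReal_def, avoiding, Measure.pi_pi, ENNReal.toReal_prod, prod_const, card_univ,
    uniformOn_univ, ← coe_compl, Measure.count_apply_finset, card_compl, ENNReal.toReal_div]
  simp only [ENNReal.toReal_natCast, Nat.cast_sub (card_le_univ T)]
  field_simp

variable [Nonempty α]

lemma integral_numMissing :
    ∫ x, (numMissing x : ℝ) ∂(Measure.pi fun _ : ι => uniformOn (Set.univ : Set α))
      = Fintype.card α * (1 - 1 / Fintype.card α : ℝ) ^ Fintype.card ι := by
  simp_rw [numMissing_eq_sum_indicator]
  rw [integral_finsetSum _ fun _ _ => .of_finite]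
  simp [integral_indicator_one, MeasurableSet.of_discrete, measureReal_avoiding]

lemma integral_numMissing_sq :
    ∫ x, (numMissing x : ℝ) ^ 2 ∂(Measure.pi fun _ : ι => uniformOn (Set.univ : Set α))
      = Fintype.card α * (1 - 1 / Fintype.card α : ℝ) ^ Fintype.card ι
        + Fintype.card α * (Fintype.card α - 1)
          * (1 - 2 / Fintype.card α : ℝ) ^ Fintype.card ι := by
  have hsq (x : ι → α) : (numMissing x : ℝ) ^ 2
      = ∑ v, ∑ w, (avoiding ι ({v} ∪ {w})).indicator 1 x := by
    simp_rw [numMissing_eq_sum_indicator, sq, sum_mul_sum, ← avoiding_inter_avoiding,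
      Set.inter_indicator_one]
    rfl
  simp_rw [hsq]
  simp_rw [integral_finsetSum _ fun _ _ => Integrable.of_finite,
    integral_indicator_one .of_discrete, measureReal_avoiding]
  have hrow (v : α) : ∑ w, (1 - #({v} ∪ {w}) / Fintype.card α : ℝ) ^ Fintype.card ι
      = (1 - 1 / Fintype.card α : ℝ) ^ Fintype.card ι
        + (Fintype.card α - 1) * (1 - 2 / Fintype.card α : ℝ) ^ Fintype.card ι := by
    rw [← add_sum_erase _ _ (mem_univ v), union_self, card_singleton, Nat.cast_one,
      sum_congr rfl fun w hw => by rw [singleton_union, card_pair (ne_of_mem_erase hw).symm],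
      sum_const, card_erase_of_mem (mem_univ v), card_univ, nsmul_eq_mul,
      Nat.cast_sub Fintype.card_pos]
    norm_num
  rw [sum_congr rfl fun v _ => hrow v, sum_const, card_univ, nsmul_eq_mul]
  ring

lemma variance_numMissing_le (hα : 2 ≤ Fintype.card α) :
    variance (fun x : ι → α => (numMissing x : ℝ))
        (Measure.pi fun _ : ι => uniformOn (Set.univ : Set α))
      ≤ Fintype.card ι ^ 2 / Fintype.card α := by
  rw [variance_eq_sub .of_discrete]
  simp only [Pi.pow_apply, integral_numMissing, integral_numMissing_sq]
  exact occupancy_variance_formula_le (by exact_mod_cast hα) _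

end Occupancy

lemma numDistinct_eq_sub_numMissing {m k : ℕ} (x : Fin m → Fin k) :
    (numDistinct x : ℝ) = k - numMissing x := by
  rw [numMissing, card_compl, Fintype.card_fin,
    Nat.cast_sub ((card_le_univ _).trans_eq (Fintype.card_fin k)), numDistinct]
  ring

lemma variance_numDistinct_le_s12 {m k : ℕ} (hk : 2 ≤ k) :
    variance (fun x : Fin m → Fin k => (numDistinct x : ℝ))
        (Measure.pi fun _ => uniformOn Set.univ)
      ≤ m ^ 2 / k := by
  have : Nonempty (Fin k) := ⟨⟨0, by omega⟩⟩
  simp_rw [numDistinct_eq_sub_numMissing]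
  rw [variance_const_sub .of_discrete]
  simpa using variance_numMissing_le (ι := Fin m) (α := Fin k) (by simpa using hk)

lemma meas_le_integral_sub_le_variance_div_sq {Ω : Type*} [MeasurableSpace Ω] {μ : Measure Ω}
    [IsFiniteMeasure μ] {X : Ω → ℝ} (hX : MemLp X 2 μ) {t : ℝ} (ht : 0 < t) :
    μ {ω | X ω ≤ μ[X] - t} ≤ ENNReal.ofReal (variance X μ / t ^ 2) := by
  refine (measure_mono fun ω (hω : X ω ≤ μ[X] - t) => ?_).trans
    (meas_ge_le_variance_div_sq hX ht)
  rw [Set.mem_ofPred_eq, abs_sub_comm]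
  exact le_abs.2 (Or.inl (by linarith))

theorem unique_count_lower_tail_general (k n m : ℕ)
    (h1 : Real.sqrt k / 2 < n) (h2 : n ≤ m) (h3 : m ≤ 2 * n) (h4 : (m : ℝ) ≤ k / 2) :
    (Measure.pi fun _ : Fin m => unifFinset (Finset.univ : Finset (Fin k)))
        {x : Fin m → Fin k |
          (numDistinct x : ℝ) ≤
            (∫ y : Fin m → Fin k, (numDistinct y : ℝ)
              ∂(Measure.pi fun _ : Fin m => unifFinset (Finset.univ : Finset (Fin k))))
            - 8 * n / Real.sqrt k}
      ≤ 1 / 8 := by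
  have hn : (0 : ℝ) < n := (div_nonneg (Real.sqrt_nonneg _) zero_le_two).trans_lt h1
  have hk : 2 ≤ k := by
    have : (1 : ℝ) ≤ m := by exact_mod_cast (Nat.cast_pos.1 hn).trans_le h2
    exact_mod_cast (by linarith : (2 : ℝ) ≤ k)
  have hk0 : (0 : ℝ) < k := by positivity
  have hm : (m : ℝ) ^ 2 ≤ 8 * n ^ 2 := by
    have : (m : ℝ) ≤ 2 * n := by exact_mod_cast h3
    nlinarith
  have ht : (8 * n / Real.sqrt k) ^ 2 = 64 * n ^ 2 / k := by
    rw [div_pow, Real.sq_sqrt hk0.le]; ring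
  simp only [unifFinset_univ]
  refine (meas_le_integral_sub_le_variance_div_sq .of_discrete (by positivity)).trans ?_
  calc _ ≤ ENNReal.ofReal (1 / 8) := by
        refine ENNReal.ofReal_le_ofReal ?_
        rw [div_le_iff₀ (by positivity), ht]
        calc _ ≤ (m : ℝ) ^ 2 / k := variance_numDistinct_le_s12 hk
          _ ≤ 8 * n ^ 2 / k := by gcongr
          _ = 1 / 8 * (64 * n ^ 2 / k) := by ring
    _ = 1 / 8 := by rw [ENNReal.ofReal_div_of_pos (by norm_num)]; norm_num

/-- Lower tail bound for the number `U` of distinct values among `m` i.i.d. uniform draws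
from a `k`-element set, where `√k/2 < n`, `n ≤ m ≤ 2n` and `m ≤ k/2`:
`Pr(U ≤ E[U] − 8n/√k) ≤ 1/8`. -/
theorem unique_count_lower_tail (k n m : ℕ) (hk : 1 ≤ k)
    (h1 : Real.sqrt k / 2 < n) (h2 : n ≤ m) (h3 : m ≤ 2 * n) (h4 : (m : ℝ) ≤ k / 2) :
    (Measure.pi fun _ : Fin m => unifFinset (Finset.univ : Finset (Fin k)))
        {x : Fin m → Fin k |
          (numDistinct x : ℝ) ≤
            (∫ y : Fin m → Fin k, (numDistinct y : ℝ)
              ∂(Measure.pi fun _ : Fin m => unifFinset (Finset.univ : Finset (Fin k))))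
            - 8 * n / Real.sqrt k}
      ≤ 1 / 8 :=
  unique_count_lower_tail_general k n m h1 h2 h3 h4
end

section
/- Let p > 0, let n > 0 and 0 < r ≤ n be reals, and let u ≥ 0 be a real number. Then the Kullback–Leibler divergence satisfies KL(Poisson((n+r)·p) ‖ Poisson(n·p + r·u/n)) ≤ 2·r²·(u − n·p)² / (n²·p·(n+r)). -/
open MeasureTheory ProbabilityTheory
open scoped NNReal ENNReal

/-- The Kullback–Leibler divergence between two probability measures on `ℕ`
(for `P ≪ Q`), written as a sum over point masses: `∑ⱼ P(j)·log(P(j)/Q(j))`. -/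
noncomputable def klNat (P Q : Measure ℕ) : ℝ :=
  ∑' j : ℕ, (P {j}).toReal * Real.log ((P {j}).toReal / (Q {j}).toReal)

/-! The KL divergence between two Poisson laws has the closed form `a log (a / b) + b - a`,
because the log-likelihood ratio `b - a + j log (a / b)` is affine in `j` and the Poisson mean
is its rate. The elementary bound `log x ≤ x - 1` turns it into the χ²-divergence
`(a - b)² / b`, and `r ≤ n` keeps the second rate above half the first. -/

open Real

lemma hasSum_mul_poissonMeasure_real (r : ℝ≥0) :
    HasSum (fun j : ℕ ↦ (j : ℝ) * (poissonMeasure r).real {j}) r := by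
  have hshift : (fun j : ℕ ↦ ((j + 1 : ℕ) : ℝ) * (poissonMeasure r).real {j + 1}) =
      fun j : ℕ ↦ (r : ℝ) * (poissonMeasure r).real {j} := by
    funext j
    simp only [poissonMeasure_real_singleton, Nat.factorial_succ, pow_succ]
    push_cast
    field_simp
  have hsum := (hasSum_one_poissonMeasure r).mul_left (r : ℝ)
  simp only [← poissonMeasure_real_singleton, mul_one, ← hshift] at hsum
  exact (hasSum_nat_add_iff' 1).mp (by simpa using hsum)

lemma log_poissonMeasure_real_div {a b : ℝ≥0} (ha : 0 < a) (hb : 0 < b) (j : ℕ) :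
    log ((poissonMeasure a).real {j} / (poissonMeasure b).real {j})
      = (b - a) + j * log (a / b) := by
  have hb' : (b : ℝ) ≠ 0 := by positivity
  have hratio : (poissonMeasure a).real {j} / (poissonMeasure b).real {j}
      = exp (b - a) * (a / b) ^ j := by
    rw [poissonMeasure_real_singleton, poissonMeasure_real_singleton, exp_sub, exp_neg, exp_neg,
      div_pow]
    field_simp
  rw [hratio, log_mul (exp_ne_zero _) (by positivity), log_exp, log_pow]

lemma klNat_poissonMeasure {a b : ℝ≥0} (ha : 0 < a) (hb : 0 < b) :
    klNat (poissonMeasure a) (poissonMeasure b) = a * log (a / b) + b - a := by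
  have hterms : HasSum (fun j : ℕ ↦ (poissonMeasure a).real {j} *
      log ((poissonMeasure a).real {j} / (poissonMeasure b).real {j}))
      ((b - a) * 1 + log (a / b) * a) := by
    have hsplit := ((hasSum_one_poissonMeasure a).mul_left ((b : ℝ) - a)).add
      ((hasSum_mul_poissonMeasure_real a).mul_left (log (a / b)))
    refine (funext fun j ↦ ?_ : (fun j : ℕ ↦ _) = _) ▸ hsplit
    rw [log_poissonMeasure_real_div ha hb, poissonMeasure_real_singleton]
    ring
  rw [klNat]
  simp only [← measureReal_def]
  rw [hterms.tsum_eq]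
  ring

lemma mul_log_div_add_sub_le_sq_sub_div {a b : ℝ} (ha : 0 ≤ a) (hb : 0 < b) :
    a * log (a / b) + b - a ≤ (a - b) ^ 2 / b := by
  have hlog : a * log (a / b) ≤ a * (a / b - 1) := by
    rcases ha.eq_or_lt with rfl | ha
    · simp
    · exact mul_le_mul_of_nonneg_left (log_le_sub_one_of_pos (by positivity)) ha.le
  have hchi : a * (a / b - 1) + b - a = (a - b) ^ 2 / b := by
    field_simp
    ring
  linarith

/-- `KL(Poisson((n+r)·p) ‖ Poisson(n·p + r·u/n)) ≤ 2r²(u − np)²/(n²·p·(n+r))`. -/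
theorem klNat_poisson_perturbed (p n r u : ℝ) (hp : 0 < p) (hn : 0 < n) (hr : 0 < r)
    (hrn : r ≤ n) (hu : 0 ≤ u) :
    klNat (poissonMeasure (((n + r) * p).toNNReal))
        (poissonMeasure ((n * p + r * u / n).toNNReal))
      ≤ 2 * r ^ 2 * (u - n * p) ^ 2 / (n ^ 2 * p * (n + r)) := by
  set a := (n + r) * p
  set b := n * p + r * u / n
  have ha : 0 < a := by positivity
  have hb_half : a / 2 ≤ b := by
    have : 0 ≤ r * u / n := by positivity
    nlinarith
  have hb : 0 < b := by linarith
  rw [klNat_poissonMeasure (Real.toNNReal_pos.mpr ha) (Real.toNNReal_pos.mpr hb),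
    Real.coe_toNNReal a ha.le, Real.coe_toNNReal b hb.le]
  have hab : a - b = r * (n * p - u) / n := by
    simp only [a, b]
    field_simp
    ring
  calc a * log (a / b) + b - a
      ≤ (a - b) ^ 2 / b := mul_log_div_add_sub_le_sq_sub_div ha.le hb
    _ ≤ (a - b) ^ 2 / (a / 2) := div_le_div_of_nonneg_left (sq_nonneg _) (by positivity) hb_half
    _ = 2 * r ^ 2 * (u - n * p) ^ 2 / (n ^ 2 * p * (n + r)) := by
      rw [hab]
      simp only [a]
      field_simp
      ring
end

section
/- There is an absolute constant C > 0 such that for every n ≥ 1 and every p ∈ [0,1], the total variation distance between the Binomial(n+1, p) distribution and the distribution of H + B is at most C/n, where H ~ Binomial(n, p) and, conditionally on H, B ~ Bernoulli(H/n). (Equivalently: the (n, n+1) amplification scheme that appends one draw from the empirical distribution of n i.i.d. Bernoulli(p) samples and randomly shuffles achieves total variation distance O(1/n) from n+1 i.i.d. draws.) -/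
open MeasureTheory ProbabilityTheory
open scoped NNReal ENNReal

/-- The `Binomial(n, p)` distribution as a distribution on `ℕ`. -/
noncomputable def binomNat (p : ℝ≥0∞) (hp : p ≤ 1) (n : ℕ) : PMF ℕ :=
  (PMF.binomial p.toNNReal (by simpa using ENNReal.toNNReal_mono ENNReal.one_ne_top hp) n).map (fun i => (i : ℕ))

/-- The law of `H + B`, where `H ∼ Binomial(n, p)` and, conditionally on `H`,
`B ∼ Bernoulli(H/n)`. -/
noncomputable def binomPlusEmpirical (p : ℝ≥0∞) (hp : p ≤ 1) (n : ℕ) : PMF ℕ :=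
  (PMF.binomial p.toNNReal (by simpa using ENNReal.toNNReal_mono ENNReal.one_ne_top hp) n).bind fun h =>
    (PMF.bernoulli (((h : ℕ) : ℝ≥0∞) / (n : ℝ≥0∞)).toNNReal
        (by
          have h1 : ((h : ℕ) : ℝ≥0∞) / (n : ℝ≥0∞) ≤ 1 := ENNReal.div_le_of_le_mul (by
            simpa using (Nat.cast_le (α := ℝ≥0∞)).mpr h.is_le)
          simpa using ENNReal.toNNReal_mono ENNReal.one_ne_top h1)).map
      fun b => (h : ℕ) + (if b then 1 else 0)


/-! Write `N = n + 1` and `b_k = P(Binomial(N, x) = k)`. The weights of `Binomial(n, x)` are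
`N (1 - x) P(H = k) = (N - k) b_k` and `N x P(H = k - 1) = k b_k`, so the law `g` of `H + B`
satisfies `n N x (1 - x) (b_k - g_k) = -b_k Q(k)` with
`Q(k) = (N x - k)² - (N - k) x² - k (1 - x)²`. Bounding `|Q(k)|` by the sum of the three
nonnegative terms, whose mean under `Binomial(N, x)` is `2 N x (1 - x)` by the first two moment
identities, gives `∑ₖ |b_k - g_k| ≤ 2 / n`, and this sum dominates the total variation distance. -/

set_option linter.deprecated false

open Finset Polynomial

theorem tvDist_toMeasure_le_sum_abs_sub {α : Type*} [MeasurableSpace α] (P Q : PMF α)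
    (s : Finset α) (hP : ∀ a ∉ s, P a = 0) (hQ : ∀ a ∉ s, Q a = 0) :
    tvDist P.toMeasure Q.toMeasure ≤ ∑ a ∈ s, |(P a).toReal - (Q a).toReal| := by
  have measure_eq (R : PMF α) (hR : ∀ a ∉ s, R a = 0) {A : Set α} (hA : MeasurableSet A) :
      (R.toMeasure A).toReal = ∑ a ∈ s, (A.indicator R a).toReal := by
    rw [R.toMeasure_apply hA, tsum_eq_sum fun a ha => by simp [hR a ha],
      ENNReal.toReal_sum fun a _ => ne_top_of_le_ne_top (R.apply_ne_top a)
        (Set.indicator_le_self A R a)]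
  refine ciSup_le fun ⟨A, hA⟩ => ?_
  rw [measure_eq P hP hA, measure_eq Q hQ hA, ← sum_sub_distrib]
  refine (abs_sum_le_sum_abs _ _).trans (sum_le_sum fun a _ => ?_)
  by_cases ha : a ∈ A <;> simp [ha]

namespace PMF

theorem toReal_bind_apply {α β : Type*} [Fintype α] (P : PMF α) (f : α → PMF β) (b : β) :
    (P.bind f b).toReal = ∑ a, (P a).toReal * (f a b).toReal := by
  rw [bind_apply, tsum_fintype, ENNReal.toReal_sum fun a _ =>
    ENNReal.mul_ne_top (P.apply_ne_top a) ((f a).apply_ne_top b)]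
  simp only [ENNReal.toReal_mul]

theorem toReal_map_apply {α β : Type*} [Fintype α] [DecidableEq β] (P : PMF α) (f : α → β)
    (b : β) : (P.map f b).toReal = ∑ a, if b = f a then (P a).toReal else 0 := by
  rw [map_apply, tsum_fintype, ENNReal.toReal_sum fun a _ => by
    split_ifs <;> simp [P.apply_ne_top]]
  simp only [apply_ite ENNReal.toReal, ENNReal.toReal_zero]
  congr!

theorem toReal_binomial_apply (q : ℝ≥0) (hq : q ≤ 1) (n : ℕ) (i : Fin (n + 1)) :
    (binomial q hq n i).toReal = (bernsteinPolynomial ℝ n i).eval (q : ℝ) := by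
  simp [binomial_apply, bernsteinPolynomial,
    ENNReal.toReal_sub_of_le (ENNReal.coe_le_one_iff.mpr hq) ENNReal.one_ne_top]
  ring

theorem toReal_map_bernoulli_add_apply (r : ℝ≥0) (hr : r ≤ 1) (h k : ℕ) :
    (((bernoulli r hr).map fun b => h + if b then 1 else 0) k).toReal =
      (if k = h then 1 - (r : ℝ) else 0) + if k = h + 1 then (r : ℝ) else 0 := by
  rw [toReal_map_apply, Fintype.sum_bool, add_comm]
  simp [bernoulli_apply,
    ENNReal.toReal_sub_of_le (ENNReal.coe_le_one_iff.mpr hr) ENNReal.one_ne_top]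

end PMF

namespace bernsteinPolynomial

variable {R : Type*} [CommRing R]

theorem X_mul (n ν : ℕ) :
    X * ((n : R[X]) + 1) * bernsteinPolynomial R n ν =
      ((ν : R[X]) + 1) * bernsteinPolynomial R (n + 1) (ν + 1) := by
  have hchoose := congrArg (Nat.cast (R := R[X])) (Nat.add_one_mul_choose_eq n ν)
  push_cast at hchoose
  simp only [bernsteinPolynomial, Nat.add_sub_add_right]
  linear_combination X ^ (ν + 1) * (1 - X) ^ (n - ν) * hchoose

theorem one_sub_X_mul (n ν : ℕ) :
    (1 - X) * ((n : R[X]) + 1) * bernsteinPolynomial R n ν =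
      ((n + 1 - ν : ℕ) : R[X]) * bernsteinPolynomial R (n + 1) ν := by
  rcases le_or_gt ν n with hν | hν
  · have hchoose := congrArg (Nat.cast (R := R[X])) (Nat.choose_mul_succ_eq n ν)
    have hexp : n + 1 - ν = n - ν + 1 := by omega
    simp only [bernsteinPolynomial, hexp, pow_succ] at hchoose ⊢
    push_cast at hchoose ⊢
    linear_combination X ^ ν * (1 - X) ^ (n - ν) * (1 - X) * hchoose
  · rcases (Nat.succ_le_of_lt hν).eq_or_lt with rfl | hν'
    · simp [eq_zero_of_lt R (Nat.lt_succ_self n)]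
    · simp [eq_zero_of_lt R hν, eq_zero_of_lt R hν']

end bernsteinPolynomial

theorem sum_bernsteinPolynomial_eval_mul_second_moments (N : ℕ) (x : ℝ) :
    ∑ k ∈ range (N + 1), (bernsteinPolynomial ℝ N k).eval x *
        ((N * x - k) ^ 2 + (N - k) * x ^ 2 + k * (1 - x) ^ 2) = 2 * N * x * (1 - x) := by
  have h0 : ∑ k ∈ range (N + 1), (bernsteinPolynomial ℝ N k).eval x = 1 := by
    simpa [eval_finset_sum] using congrArg (eval x) (bernsteinPolynomial.sum ℝ N)
  have h1 : ∑ k ∈ range (N + 1), k * (bernsteinPolynomial ℝ N k).eval x = N * x := by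
    simpa [eval_finset_sum] using congrArg (eval x) (bernsteinPolynomial.sum_smul ℝ N)
  have h2 : ∑ k ∈ range (N + 1), (N * x - k) ^ 2 * (bernsteinPolynomial ℝ N k).eval x =
      N * x * (1 - x) := by
    simpa [eval_finset_sum] using congrArg (eval x) (bernsteinPolynomial.variance ℝ N)
  calc _ = ∑ k ∈ range (N + 1), ((N * x - k) ^ 2 * (bernsteinPolynomial ℝ N k).eval x +
          (1 - 2 * x) * (k * (bernsteinPolynomial ℝ N k).eval x) +
          N * x ^ 2 * (bernsteinPolynomial ℝ N k).eval x) :=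
        sum_congr rfl fun k _ => by ring
    _ = 2 * N * x * (1 - x) := by
        rw [sum_add_distrib, sum_add_distrib, ← mul_sum, ← mul_sum, h0, h1, h2]
        ring

/-- `P(H + B = k)` for `H ∼ Binomial(n, x)` and `B ∼ Bernoulli(H / n)`: either `H = k` and
`B = 0`, or `H = k - 1` and `B = 1`. -/
noncomputable def amplifiedWeight (n : ℕ) (x : ℝ) : ℕ → ℝ
  | 0 => (bernsteinPolynomial ℝ n 0).eval x
  | k + 1 => (bernsteinPolynomial ℝ n (k + 1)).eval x * (1 - (k + 1) / n) +
      (bernsteinPolynomial ℝ n k).eval x * (k / n)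

theorem mul_amplifiedWeight {n : ℕ} (hn : n ≠ 0) (x : ℝ) {k : ℕ} (hk : k ≤ n + 1) :
    n * (n + 1) * x * (1 - x) * amplifiedWeight n x k =
      (bernsteinPolynomial ℝ (n + 1) k).eval x *
        (x * (n + 1 - k) * (n - k) + (1 - x) * k * (k - 1)) := by
  have hn' : (n : ℝ) ≠ 0 := Nat.cast_ne_zero.mpr hn
  have hX (j : ℕ) := congrArg (eval x) (bernsteinPolynomial.X_mul (R := ℝ) n j)
  have h1X (j : ℕ) := congrArg (eval x) (bernsteinPolynomial.one_sub_X_mul (R := ℝ) n j)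
  simp only [eval_mul, eval_X, eval_sub, eval_one, eval_add, eval_natCast] at hX h1X
  cases k with
  | zero =>
    have h1 := h1X 0
    simp only [amplifiedWeight, Nat.sub_zero] at h1 ⊢
    push_cast at h1 ⊢
    linear_combination n * x * h1
  | succ k =>
    simp only [amplifiedWeight]
    have h1 := h1X (k + 1)
    rw [Nat.cast_sub hk] at h1
    push_cast at h1 ⊢
    field_simp
    linear_combination x * (n - k - 1) * h1 + (1 - x) * k * hX k

theorem amplifiedWeight_zero_right (n k : ℕ) :
    amplifiedWeight n 0 k = (bernsteinPolynomial ℝ (n + 1) k).eval 0 := by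
  rcases k with _ | _ | k <;> simp [amplifiedWeight, bernsteinPolynomial.eval_at_0]

theorem amplifiedWeight_one_right {n : ℕ} (hn : n ≠ 0) (k : ℕ) :
    amplifiedWeight n 1 k = (bernsteinPolynomial ℝ (n + 1) k).eval 1 := by
  cases k with
  | zero => simp [amplifiedWeight, bernsteinPolynomial.eval_at_1, hn.symm]
  | succ k =>
    rcases eq_or_ne (k + 1) n with rfl | hkn
    · have hk : (k : ℝ) + 1 ≠ 0 := Nat.cast_add_one_ne_zero k
      simp [amplifiedWeight, bernsteinPolynomial.eval_at_1, div_self hk]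
    · rcases eq_or_ne k n with rfl | hkn'
      · simp [amplifiedWeight, bernsteinPolynomial.eval_at_1, hn]
      · simp [amplifiedWeight, bernsteinPolynomial.eval_at_1, hkn, hkn']

theorem amplifiedWeight_eq_zero_of_lt {n k : ℕ} (h : n + 1 < k) (x : ℝ) :
    amplifiedWeight n x k = 0 := by
  obtain ⟨j, rfl⟩ : ∃ j, k = j + 1 := ⟨k - 1, by omega⟩
  simp [amplifiedWeight, bernsteinPolynomial.eq_zero_of_lt ℝ (by omega : n < j),
    bernsteinPolynomial.eq_zero_of_lt ℝ (by omega : n < j + 1)]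

theorem abs_bernsteinPolynomial_eval_sub_amplifiedWeight_le {n : ℕ} (hn : n ≠ 0) {x : ℝ}
    (hx0 : 0 < x) (hx1 : x < 1) {k : ℕ} (hk : k ≤ n + 1) :
    |(bernsteinPolynomial ℝ (n + 1) k).eval x - amplifiedWeight n x k| ≤
      (bernsteinPolynomial ℝ (n + 1) k).eval x *
          (((n + 1) * x - k) ^ 2 + (n + 1 - k) * x ^ 2 + k * (1 - x) ^ 2) /
        (n * (n + 1) * x * (1 - x)) := by
  set f := (bernsteinPolynomial ℝ (n + 1) k).eval x
  have hD : 0 < (n : ℝ) * (n + 1) * x * (1 - x) := by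
    have : (0 : ℝ) < n := Nat.cast_pos.mpr (Nat.pos_of_ne_zero hn)
    have := sub_pos.mpr hx1
    positivity
  have hf : 0 ≤ f := by
    simp only [f, bernsteinPolynomial, eval_mul, eval_pow, eval_X, eval_sub, eval_one,
      eval_natCast]
    have := sub_nonneg.mpr hx1.le
    positivity
  have hkR : (k : ℝ) ≤ n + 1 := by exact_mod_cast hk
  have hQ : |((n + 1) * x - k) ^ 2 - (n + 1 - k) * x ^ 2 - k * (1 - x) ^ 2| ≤
      ((n + 1) * x - k) ^ 2 + (n + 1 - k) * x ^ 2 + k * (1 - x) ^ 2 := by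
    have : 0 ≤ (n + 1 - k) * x ^ 2 := mul_nonneg (by linarith) (sq_nonneg x)
    rw [abs_le]
    constructor <;>
      nlinarith [sq_nonneg ((n + 1) * x - k), sq_nonneg (1 - x), k.cast_nonneg (α := ℝ)]
  have key : (f - amplifiedWeight n x k) * (n * (n + 1) * x * (1 - x)) =
      -(f * (((n + 1) * x - k) ^ 2 - (n + 1 - k) * x ^ 2 - k * (1 - x) ^ 2)) := by
    linear_combination -mul_amplifiedWeight hn x hk
  rw [le_div_iff₀ hD]
  calc |f - amplifiedWeight n x k| * (n * (n + 1) * x * (1 - x))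
      = |(f - amplifiedWeight n x k) * (n * (n + 1) * x * (1 - x))| := by
        rw [abs_mul, abs_of_pos hD]
    _ = f * |((n + 1) * x - k) ^ 2 - (n + 1 - k) * x ^ 2 - k * (1 - x) ^ 2| := by
        rw [key, abs_neg, abs_mul, abs_of_nonneg hf]
    _ ≤ _ := mul_le_mul_of_nonneg_left hQ hf

theorem sum_abs_bernsteinPolynomial_eval_sub_amplifiedWeight_le {n : ℕ} (hn : n ≠ 0) {x : ℝ}
    (hx0 : 0 ≤ x) (hx1 : x ≤ 1) :
    ∑ k ∈ range (n + 2),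
        |(bernsteinPolynomial ℝ (n + 1) k).eval x - amplifiedWeight n x k| ≤ 2 / n := by
  rcases hx0.eq_or_lt with rfl | hx0
  · simp only [amplifiedWeight_zero_right, sub_self, abs_zero, sum_const_zero]
    positivity
  rcases hx1.eq_or_lt with rfl | hx1
  · simp only [amplifiedWeight_one_right hn, sub_self, abs_zero, sum_const_zero]
    positivity
  have hD : (n : ℝ) * (n + 1) * x * (1 - x) ≠ 0 := by
    have : (n : ℝ) ≠ 0 := Nat.cast_ne_zero.mpr hn
    have := (sub_pos.mpr hx1).ne'
    positivity
  calc _ ≤ ∑ k ∈ range (n + 2), (bernsteinPolynomial ℝ (n + 1) k).eval x *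
          (((n + 1) * x - k) ^ 2 + (n + 1 - k) * x ^ 2 + k * (1 - x) ^ 2) /
        (n * (n + 1) * x * (1 - x)) :=
        sum_le_sum fun k hk => abs_bernsteinPolynomial_eval_sub_amplifiedWeight_le hn hx0 hx1
          (Nat.lt_succ_iff.mp (mem_range.mp hk))
    _ = 2 * (n + 1) * x * (1 - x) / (n * (n + 1) * x * (1 - x)) := by
        rw [← sum_div]
        congr 1
        exact_mod_cast sum_bernsteinPolynomial_eval_mul_second_moments (n + 1) x
    _ = 2 / n := by field_simp

theorem binomNat_apply_toReal (p : ℝ≥0∞) (hp : p ≤ 1) (N k : ℕ) :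
    (binomNat p hp N k).toReal = (bernsteinPolynomial ℝ N k).eval p.toReal := by
  have hq : p.toNNReal ≤ 1 := by simpa using ENNReal.toNNReal_mono ENNReal.one_ne_top hp
  have hmap : binomNat p hp N = (PMF.binomial p.toNNReal hq N).map Fin.val :=
    (PMF.map_id _).trans (PMF.bind_pure_comp _ _)
  rw [hmap, PMF.toReal_map_apply]
  simp only [PMF.toReal_binomial_apply, ENNReal.coe_toNNReal_eq_toReal]
  rw [Fin.sum_univ_eq_sum_range
    (fun i => if k = i then (bernsteinPolynomial ℝ N i).eval p.toReal else 0), sum_ite_eq]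
  split_ifs with hk
  · rfl
  · rw [bernsteinPolynomial.eq_zero_of_lt ℝ (by simpa using hk), eval_zero]

theorem binomPlusEmpirical_apply_toReal (p : ℝ≥0∞) (hp : p ≤ 1) (n k : ℕ) :
    (binomPlusEmpirical p hp n k).toReal = amplifiedWeight n p.toReal k := by
  calc _ = ∑ h ∈ range (n + 1), (bernsteinPolynomial ℝ n h).eval p.toReal *
        ((if k = h then 1 - (h / n : ℝ) else 0) + if k = h + 1 then (h / n : ℝ) else 0) := by
        rw [binomPlusEmpirical, PMF.toReal_bind_apply, ← Fin.sum_univ_eq_sum_range]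
        refine sum_congr rfl fun h _ => ?_
        congr 1
        · exact PMF.toReal_binomial_apply _ _ _ _
        · rw [PMF.toReal_map_bernoulli_add_apply, ENNReal.coe_toNNReal_eq_toReal,
            ENNReal.toReal_div]
          simp
    _ = amplifiedWeight n p.toReal k := by
        simp only [mul_add, mul_ite, mul_zero, sum_add_distrib, sum_ite_eq, mem_range]
        cases k with
        | zero => simp [amplifiedWeight]
        | succ k =>
          simp only [Nat.add_right_cancel_iff, sum_ite_eq, mem_range, amplifiedWeight]
          push_cast
          have hB (j : ℕ) (hj : ¬j < n + 1) :
              (bernsteinPolynomial ℝ n j).eval p.toReal = 0 := by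
            rw [bernsteinPolynomial.eq_zero_of_lt ℝ (by omega), eval_zero]
          split_ifs <;> simp [*]

/-- Appending one draw from the empirical distribution of `n` i.i.d. `Bernoulli(p)` samples
yields a count distribution within total variation distance `O(1/n)` of `Binomial(n+1, p)`. -/
theorem binomial_empirical_amplification :
    ∃ C : ℝ, 0 < C ∧ ∀ n : ℕ, 1 ≤ n → ∀ (p : ℝ≥0∞) (hp : p ≤ 1),
      tvDist (binomNat p hp (n + 1)).toMeasure (binomPlusEmpirical p hp n).toMeasure
        ≤ C / n := by
  refine ⟨2, two_pos, fun n hn p hp => ?_⟩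
  have eq_zero_of_toReal {P : PMF ℕ} {k : ℕ} (h : (P k).toReal = 0) : P k = 0 :=
    ((ENNReal.toReal_eq_zero_iff _).mp h).resolve_right (P.apply_ne_top k)
  have outside (k : ℕ) (hk : k ∉ range (n + 2)) : n + 1 < k := by
    simp only [mem_range, not_lt] at hk
    omega
  calc _ ≤ ∑ k ∈ range (n + 2),
          |(binomNat p hp (n + 1) k).toReal - (binomPlusEmpirical p hp n k).toReal| :=
        tvDist_toMeasure_le_sum_abs_sub _ _ _
          (fun k hk => eq_zero_of_toReal <| by
            rw [binomNat_apply_toReal, bernsteinPolynomial.eq_zero_of_lt ℝ (outside k hk),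
              eval_zero])
          (fun k hk => eq_zero_of_toReal <| by
            rw [binomPlusEmpirical_apply_toReal, amplifiedWeight_eq_zero_of_lt (outside k hk)])
    _ = ∑ k ∈ range (n + 2),
          |(bernsteinPolynomial ℝ (n + 1) k).eval p.toReal - amplifiedWeight n p.toReal k| := by
        simp only [binomNat_apply_toReal, binomPlusEmpirical_apply_toReal]
    _ ≤ 2 / n :=
        sum_abs_bernsteinPolynomial_eval_sub_amplifiedWeight_le (Nat.one_le_iff_ne_zero.mp hn)
          ENNReal.toReal_nonneg (by simpa using ENNReal.toReal_mono ENNReal.one_ne_top hp)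
end
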